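/- Every t-coefficient of every series Q_{s,r,w} lies in the kernel of ν_l; that is, I ⊆ ker ν_l. -/

import Mathlib

open scoped BigOperators

/-- The homogeneous coordinate ring of the arc space: polynomial ring in the
variables `x_j^{(i)}`, `0 ≤ j ≤ l`, `i ∈ ℕ`. -/
abbrev ArcRing (l : ℕ) := MvPolynomial (Fin (l + 1) × ℕ) ℂ

/-- The series `x_j(t) = Σ_{i ≥ 0} x_j^{(i)} t^i`. -/
noncomputable def xSeries (l : ℕ) (j : Fin (l + 1)) : PowerSeries (ArcRing l) :=
  PowerSeries.mk fun i => MvPolynomial.X (j, i)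

/-- The formal derivative `d/dt` of a formal power series. -/
noncomputable def tDeriv {R : Type*} [CommRing R] (f : PowerSeries R) : PowerSeries R :=
  PowerSeries.mk fun n => ((n + 1 : ℕ) : R) * PowerSeries.coeff (n + 1) f

/-- The series `Q_{s,r,w} = Σ_{u=s}^{r-1} (-1)^u C(r-s-1, u-s) (d^w x_u(t)/dt^w) x_{r+s-u}(t)`. -/
noncomputable def Qseries (l s r w : ℕ) (hr : r ≤ l) : PowerSeries (ArcRing l) :=
  ∑ u ∈ Finset.Icc s (r - 1),
    if h : s ≤ u ∧ u < r then
      ((-1 : ℂ) ^ u * ((r - s - 1).choose (u - s) : ℂ)) •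
        (tDeriv^[w] (xSeries l ⟨u, by omega⟩) * xSeries l ⟨r + s - u, by omega⟩)
    else 0

/-- The ideal `I` generated by all the `t`-coefficients of all the series `Q_{s,r,w}`,
for `0 ≤ s, r ≤ l` with `r - s ≥ 2` and `0 ≤ w ≤ r - s - 2`. -/
noncomputable def QIdeal (l : ℕ) : Ideal (ArcRing l) :=
  Ideal.span {p | ∃ (s r w m : ℕ) (hr : r ≤ l), s + 2 ≤ r ∧ w + s + 2 ≤ r ∧
    p = PowerSeries.coeff m (Qseries l s r w hr)}

/-- The series `a(t) = Σ a^{(i)} t^i` in the target ring `ℂ[a^{(i)}, b^{(i)}]`. -/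
noncomputable def aSeries : PowerSeries (MvPolynomial (Bool × ℕ) ℂ) :=
  PowerSeries.mk fun i => MvPolynomial.X (false, i)

/-- The series `b(t) = Σ b^{(i)} t^i` in the target ring `ℂ[a^{(i)}, b^{(i)}]`. -/
noncomputable def bSeries : PowerSeries (MvPolynomial (Bool × ℕ) ℂ) :=
  PowerSeries.mk fun i => MvPolynomial.X (true, i)

/-- The Veronese arc map `ν_l`, sending `x_j^{(i)}` to the coefficient of `t^i` in
`a(t)^{l-j} b(t)^j`. -/
noncomputable def nuMap (l : ℕ) : ArcRing l →ₐ[ℂ] MvPolynomial (Bool × ℕ) ℂ :=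
  MvPolynomial.aeval fun p : Fin (l + 1) × ℕ =>
    PowerSeries.coeff p.2
      (aSeries ^ (l - (p.1 : ℕ)) * bSeries ^ (p.1 : ℕ))

open Finset in
lemma my_altsum {S : Type*} [CommRing S] :
    ∀ n d : ℕ, d < n →
      ∑ k ∈ range (n + 1), (-1 : S) ^ k * (n.choose k : S) * (k : S) ^ d = 0 := by
  intro n
  induction n with
  | zero => intro d hd; omega
  | succ n ih =>
    intro d hd
    match d with
    | 0 =>
      have h := Int.alternating_sum_range_choose_of_ne (Nat.succ_ne_zero n)
      have : ((∑ i ∈ range (n + 2), (-1 : ℤ) ^ i * ((n+1).choose i : ℤ) : ℤ) : S) = 0 := by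
        rw [h]; simp
      rw [Int.cast_sum] at this
      simpa using this
    | e + 1 =>
      have he : e < n := by omega
      rw [Finset.sum_range_succ']
      have h0 : (-1 : S) ^ 0 * ((n+1).choose 0 : S) * ((0:ℕ) : S) ^ (e+1) = 0 := by simp
      rw [h0, add_zero]
      have key : ∀ j ∈ range (n + 1),
          (-1 : S) ^ (j+1) * ((n+1).choose (j+1) : S) * ((j+1 : ℕ) : S) ^ (e+1)
          = ∑ i ∈ range (e + 1),
              (-((n:S)+1) * (e.choose i : S)) * ((-1 : S) ^ j * (n.choose j : S) * (j : S) ^ i) := by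
        intro j _
        have hc : ((n+1) * n.choose j : ℕ) = ((n+1).choose (j+1) * (j+1)) :=
          Nat.add_one_mul_choose_eq n j
        have hc' : ((n : S) + 1) * (n.choose j : S) = ((n+1).choose (j+1) : S) * ((j : S) + 1) := by
          exact_mod_cast congrArg (Nat.cast : ℕ → S) hc
        have hp : ((j : S) + 1) ^ e = ∑ i ∈ range (e + 1), (j : S) ^ i * (e.choose i : S) := by
          simpa using add_pow (j : S) 1 e
        have lhs_eq : (-1 : S) ^ (j+1) * ((n+1).choose (j+1) : S) * ((j+1 : ℕ) : S) ^ (e+1)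
            = -((n:S)+1) * ((-1 : S) ^ j * (n.choose j : S) * ((j:S)+1) ^ e) := by
          push_cast
          rw [pow_succ ((j:S)+1) e]
          linear_combination ((-1:S)^j * ((j:S)+1)^e) * hc'
        rw [lhs_eq, hp, Finset.mul_sum, Finset.mul_sum]
        apply Finset.sum_congr rfl
        intro i _
        ring
      rw [Finset.sum_congr rfl key, Finset.sum_comm]
      apply Finset.sum_eq_zero
      intro i hi
      have hin : i < e + 1 := Finset.mem_range.mp hi
      rw [← Finset.mul_sum, ih i (by omega), mul_zero]



section DerivLemmas
variable {R : Type*} [CommRing R]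

lemma tDeriv_eq (f : PowerSeries R) : tDeriv f = PowerSeries.derivativeFun f := by
  ext n
  change _ = PowerSeries.coeff n (PowerSeries.derivative R f)
  simp [tDeriv, PowerSeries.coeff_derivativeFun, mul_comm]

lemma tDeriv_mul (f g : PowerSeries R) :
    tDeriv (f * g) = tDeriv f * g + f * tDeriv g := by
  simp only [tDeriv_eq, PowerSeries.derivativeFun_mul, smul_eq_mul]; ring

lemma tDeriv_add (f g : PowerSeries R) : tDeriv (f + g) = tDeriv f + tDeriv g := by
  simp [tDeriv_eq, PowerSeries.derivativeFun_add]

lemma tDeriv_C (r : R) : tDeriv (PowerSeries.C r) = 0 := by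
  simp [tDeriv_eq, PowerSeries.derivativeFun_C]
  exact PowerSeries.derivative_C

lemma tDeriv_zero : tDeriv (0 : PowerSeries R) = 0 := by
  have := tDeriv_C (0 : R); simpa using this

lemma tDeriv_natCast (k : ℕ) : tDeriv ((k : PowerSeries R)) = 0 := by
  have : ((k : PowerSeries R)) = PowerSeries.C (k : R) := by
    simp [map_natCast]
  rw [this, tDeriv_C]

lemma tDeriv_pow_of_eq_zero {c : PowerSeries R} (hc : tDeriv c = 0) (i : ℕ) :
    tDeriv (c ^ i) = 0 := by
  induction i with
  | zero => simpa using tDeriv_C (1 : R)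
  | succ i ih => rw [pow_succ, tDeriv_mul, ih, hc]; ring

lemma mul_tDeriv_pow (c : PowerSeries R) (i : ℕ) :
    c * tDeriv (c ^ i) = (i : PowerSeries R) * (tDeriv c * c ^ i) := by
  induction i with
  | zero =>
    have h1 : tDeriv (1 : PowerSeries R) = 0 := by simpa using tDeriv_C (1 : R)
    simp [h1]
  | succ i ih =>
    rw [pow_succ, tDeriv_mul]
    push_cast
    linear_combination c * ih
end DerivLemmas

section MoreDeriv
variable {R : Type*} [CommRing R]

lemma ab_tDeriv_monomial (a b : PowerSeries R) (i j : ℕ) :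
    (a * b) * tDeriv (a ^ i * b ^ j)
      = ((i : PowerSeries R) * (tDeriv a * b) + (j : PowerSeries R) * (a * tDeriv b))
        * (a ^ i * b ^ j) := by
  have h0 := tDeriv_mul (a ^ i) (b ^ j)
  have h1 := mul_tDeriv_pow a i
  have h2 := mul_tDeriv_pow b j
  linear_combination (a * b) * h0 + b ^ j * b * h1 + a ^ i * a * h2

/-- coefficientwise derivative of a polynomial over a power series ring -/
noncomputable def dPoly (P : Polynomial (PowerSeries R)) : Polynomial (PowerSeries R) :=
  P.sum fun i c => Polynomial.C (tDeriv c) * Polynomial.X ^ i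

lemma dPoly_coeff (P : Polynomial (PowerSeries R)) (k : ℕ) :
    (dPoly P).coeff k = tDeriv (P.coeff k) := by
  induction P using Polynomial.induction_on' with
  | add p q hp hq =>
    have hadd : dPoly (p + q) = dPoly p + dPoly q := by
      unfold dPoly
      apply Polynomial.sum_add_index
      · intro i; simp [tDeriv_zero]
      · intro i c d; rw [tDeriv_add]; rw [map_add]; ring
    rw [hadd, Polynomial.coeff_add, hp, hq, Polynomial.coeff_add, tDeriv_add]
  | monomial n c =>
    have hm : dPoly (Polynomial.monomial n c) = Polynomial.C (tDeriv c) * Polynomial.X ^ n := by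
      unfold dPoly
      apply Polynomial.sum_monomial_index
      simp [tDeriv_zero]
    rw [hm]
    rw [Polynomial.coeff_monomial, Polynomial.coeff_C_mul, Polynomial.coeff_X_pow]
    by_cases h : k = n
    · simp [h]
    · simp [h, Ne.symm h, tDeriv_zero]

lemma dPoly_natDegree_le (P : Polynomial (PowerSeries R)) :
    (dPoly P).natDegree ≤ P.natDegree := by
  apply Polynomial.natDegree_le_iff_coeff_eq_zero.mpr
  intro N hN
  rw [dPoly_coeff, Polynomial.coeff_eq_zero_of_natDegree_lt hN, tDeriv_zero]

lemma tDeriv_eval {P : Polynomial (PowerSeries R)} {c : PowerSeries R} (hc : tDeriv c = 0) :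
    tDeriv (P.eval c) = (dPoly P).eval c := by
  induction P using Polynomial.induction_on' with
  | add p q hp hq =>
    have hadd : dPoly (p + q) = dPoly p + dPoly q := by
      ext k; simp [dPoly_coeff, tDeriv_add]
    rw [hadd, Polynomial.eval_add, Polynomial.eval_add, tDeriv_add, hp, hq]
  | monomial n a =>
    have hm : dPoly (Polynomial.monomial n a) = Polynomial.C (tDeriv a) * Polynomial.X ^ n := by
      ext k
      rw [dPoly_coeff, Polynomial.coeff_monomial, Polynomial.coeff_C_mul,
        Polynomial.coeff_X_pow]
      by_cases h : k = n
      · simp [h]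
      · simp [h, Ne.symm h, tDeriv_zero]
    rw [hm]
    simp only [Polynomial.eval_monomial, Polynomial.eval_mul, Polynomial.eval_C,
      Polynomial.eval_pow, Polynomial.eval_X]
    rw [tDeriv_mul, tDeriv_pow_of_eq_zero hc]
    ring
end MoreDeriv

section Main
variable {R : Type*} [CommRing R]

open Polynomial in
lemma main_poly (a b : PowerSeries R) (m p : ℕ) (w : ℕ) :
    ∃ P : Polynomial (PowerSeries R), P.natDegree ≤ w ∧
      ∀ k, k ≤ m →
        tDeriv^[w] (a ^ (m - k) * b ^ (p + k)) * (a * b) ^ w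
          = P.eval ((k : ℕ) : PowerSeries R) * (a ^ (m - k) * b ^ (p + k)) := by
  induction w with
  | zero => exact ⟨1, by simp, fun k hk => by simp⟩
  | succ w ih =>
    obtain ⟨P, hdeg, hP⟩ := ih
    set Da := tDeriv a with hDa
    set Db := tDeriv b with hDb
    refine ⟨dPoly P * Polynomial.C (a * b)
      + P * (Polynomial.C ((m : PowerSeries R) * (Da * b) + (p : PowerSeries R) * (a * Db)
              - (w : PowerSeries R) * (Da * b + a * Db))
          + Polynomial.X * Polynomial.C (a * Db - Da * b)), ?_, ?_⟩
    · apply le_trans (Polynomial.natDegree_add_le _ _)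
      apply max_le
      · apply le_trans (Polynomial.natDegree_mul_le)
        simp only [Polynomial.natDegree_C, add_zero]
        exact le_trans (dPoly_natDegree_le P) (by omega)
      · apply le_trans (Polynomial.natDegree_mul_le)
        have h2 : (Polynomial.C ((m : PowerSeries R) * (Da * b) + (p : PowerSeries R) * (a * Db)
              - (w : PowerSeries R) * (Da * b + a * Db))
          + Polynomial.X * Polynomial.C (a * Db - Da * b)).natDegree ≤ 1 := by
          apply le_trans (Polynomial.natDegree_add_le _ _)
          apply max_le ((Polynomial.natDegree_C _).le.trans (by omega))
          apply le_trans (Polynomial.natDegree_mul_le)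
          rw [Polynomial.natDegree_C]
          simpa using Polynomial.natDegree_X_le
        omega
    · intro k hk
      have hkA : tDeriv ((k : ℕ) : PowerSeries R) = 0 := tDeriv_natCast k
      set kA : PowerSeries R := ((k : ℕ) : PowerSeries R) with hkAdef
      set u : PowerSeries R := a ^ (m - k) * b ^ (p + k) with hu
      have h1 := hP k hk
      -- differentiate both sides
      have hdiff := congrArg tDeriv h1
      rw [tDeriv_mul, tDeriv_mul] at hdiff
      rw [tDeriv_eval hkA] at hdiff
      -- auxiliary identities
      have L1 : (a * b) * tDeriv ((a * b) ^ w)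
          = (w : PowerSeries R) * (tDeriv (a * b) * (a * b) ^ w) := mul_tDeriv_pow (a * b) w
      have L2 : (a * b) * tDeriv u
          = (((m - k : ℕ) : PowerSeries R) * (Da * b) + (((p + k : ℕ)) : PowerSeries R) * (a * Db))
            * u := ab_tDeriv_monomial a b (m - k) (p + k)
      have hcast1 : (((m - k : ℕ)) : PowerSeries R) = (m : PowerSeries R) - kA := by
        rw [hkAdef]; exact_mod_cast Nat.cast_sub hk
      have hcast2 : (((p + k : ℕ)) : PowerSeries R) = (p : PowerSeries R) + kA := by
        rw [hkAdef]; push_cast; ring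
      rw [hcast1, hcast2] at L2
      have L3 : tDeriv (a * b) = Da * b + a * Db := tDeriv_mul a b
      rw [L3] at L1
      rw [Function.iterate_succ_apply']
      simp only [Polynomial.eval_add, Polynomial.eval_mul, Polynomial.eval_C, Polynomial.eval_X]
      linear_combination (a * b) * hdiff - (tDeriv^[w] u) * L1 + (P.eval kA) * L2 - ((w : PowerSeries R) * (Da * b + a * Db)) * h1
  end Main

section Key
variable {R : Type*} [CommRing R] [IsDomain R]

open Finset in
lemma key_vanish (a b : PowerSeries R) (hab : a * b ≠ 0)
    (m p c d n w : ℕ) (hw : w < n) (hm : n ≤ m) (hd : n ≤ d) :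
    ∑ k ∈ range (n + 1),
      (-1 : PowerSeries R) ^ k * (n.choose k : PowerSeries R) *
        (tDeriv^[w] (a ^ (m - k) * b ^ (p + k)) * (a ^ (c + k) * b ^ (d - k))) = 0 := by
  obtain ⟨P, hdeg, hP⟩ := main_poly a b m p w
  have hcancel : (∑ k ∈ range (n + 1),
      (-1 : PowerSeries R) ^ k * (n.choose k : PowerSeries R) *
        (tDeriv^[w] (a ^ (m - k) * b ^ (p + k)) * (a ^ (c + k) * b ^ (d - k)))) * (a * b) ^ w
      = 0 := by
    rw [Finset.sum_mul]
    have step : ∀ k ∈ range (n + 1),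
        ((-1 : PowerSeries R) ^ k * (n.choose k : PowerSeries R) *
          (tDeriv^[w] (a ^ (m - k) * b ^ (p + k)) * (a ^ (c + k) * b ^ (d - k)))) * (a * b) ^ w
        = ((-1 : PowerSeries R) ^ k * (n.choose k : PowerSeries R) *
            P.eval ((k : ℕ) : PowerSeries R)) * (a ^ (m + c) * b ^ (p + d)) := by
      intro k hk
      have hk' : k ≤ n := by have := Finset.mem_range.mp hk; omega
      have h1 := hP k (le_trans hk' hm)
      have ea : a ^ (m - k) * a ^ (c + k) = a ^ (m + c) := by
        rw [← pow_add]; congr 1; omega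
      have eb : b ^ (p + k) * b ^ (d - k) = b ^ (p + d) := by
        rw [← pow_add]; congr 1; omega
      calc ((-1 : PowerSeries R) ^ k * (n.choose k : PowerSeries R) *
          (tDeriv^[w] (a ^ (m - k) * b ^ (p + k)) * (a ^ (c + k) * b ^ (d - k)))) * (a * b) ^ w
          = ((-1 : PowerSeries R) ^ k * (n.choose k : PowerSeries R)) *
            ((tDeriv^[w] (a ^ (m - k) * b ^ (p + k)) * (a * b) ^ w) *
              (a ^ (c + k) * b ^ (d - k))) := by ring
        _ = ((-1 : PowerSeries R) ^ k * (n.choose k : PowerSeries R)) *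
            ((P.eval ((k : ℕ) : PowerSeries R) * (a ^ (m - k) * b ^ (p + k))) *
              (a ^ (c + k) * b ^ (d - k))) := by rw [h1]
        _ = ((-1 : PowerSeries R) ^ k * (n.choose k : PowerSeries R) *
            P.eval ((k : ℕ) : PowerSeries R)) *
              ((a ^ (m - k) * a ^ (c + k)) * (b ^ (p + k) * b ^ (d - k))) := by ring
        _ = _ := by rw [ea, eb]
    rw [Finset.sum_congr rfl step, ← Finset.sum_mul]
    have hzero : ∑ k ∈ range (n + 1),
        (-1 : PowerSeries R) ^ k * (n.choose k : PowerSeries R) *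
          P.eval ((k : ℕ) : PowerSeries R) = 0 := by
      have hev : ∀ k : ℕ, P.eval ((k : ℕ) : PowerSeries R)
          = ∑ i ∈ range (w + 1), P.coeff i * ((k : ℕ) : PowerSeries R) ^ i := fun k =>
        Polynomial.eval_eq_sum_range' (by omega) _
      calc ∑ k ∈ range (n + 1),
            (-1 : PowerSeries R) ^ k * (n.choose k : PowerSeries R) *
              P.eval ((k : ℕ) : PowerSeries R)
          = ∑ k ∈ range (n + 1), ∑ i ∈ range (w + 1),
              P.coeff i * ((-1 : PowerSeries R) ^ k * (n.choose k : PowerSeries R) *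
                ((k : ℕ) : PowerSeries R) ^ i) := by
            apply Finset.sum_congr rfl
            intro k _
            rw [hev k, Finset.mul_sum]
            apply Finset.sum_congr rfl
            intro i _
            ring
        _ = ∑ i ∈ range (w + 1), P.coeff i *
              ∑ k ∈ range (n + 1), (-1 : PowerSeries R) ^ k * (n.choose k : PowerSeries R) *
                ((k : ℕ) : PowerSeries R) ^ i := by
            rw [Finset.sum_comm]
            apply Finset.sum_congr rfl
            intro i _
            rw [Finset.mul_sum]
        _ = 0 := by
            apply Finset.sum_eq_zero
            intro i hi
            have hin : i < n := by have := Finset.mem_range.mp hi; omega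
            rw [my_altsum n i hin, mul_zero]
    rw [hzero, zero_mul]
  have hne : (a * b) ^ w ≠ 0 := pow_ne_zero _ hab
  exact (mul_eq_zero.mp hcancel).resolve_right hne
end Key

section MapLemmas

lemma map_tDeriv {R S : Type*} [CommRing R] [CommRing S] (f : R →+* S) (g : PowerSeries R) :
    PowerSeries.map f (tDeriv g) = tDeriv (PowerSeries.map f g) := by
  ext n
  simp [PowerSeries.coeff_map, tDeriv, PowerSeries.coeff_mk, map_mul, map_natCast]

lemma map_tDeriv_iterate {R S : Type*} [CommRing R] [CommRing S] (f : R →+* S)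
    (w : ℕ) (g : PowerSeries R) :
    PowerSeries.map f (tDeriv^[w] g) = tDeriv^[w] (PowerSeries.map f g) := by
  induction w with
  | zero => rfl
  | succ w ih =>
    rw [Function.iterate_succ_apply', Function.iterate_succ_apply', map_tDeriv, ih]

lemma map_xSeries (l : ℕ) (j : Fin (l + 1)) :
    PowerSeries.map (nuMap l).toRingHom (xSeries l j)
      = aSeries ^ (l - (j : ℕ)) * bSeries ^ (j : ℕ) := by
  ext i
  rw [PowerSeries.coeff_map]
  simp [xSeries, nuMap, PowerSeries.coeff_mk]

lemma map_csmul (l : ℕ) (c : ℂ) (f : PowerSeries (ArcRing l)) :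
    PowerSeries.map (nuMap l).toRingHom (c • f)
      = c • PowerSeries.map (nuMap l).toRingHom f := by
  apply PowerSeries.ext
  intro i
  rw [PowerSeries.coeff_map, PowerSeries.coeff_smul, PowerSeries.coeff_smul,
    PowerSeries.coeff_map]
  exact map_smul (nuMap l) c _

lemma ab_ne_zero : aSeries * bSeries ≠ 0 := by
  apply mul_ne_zero
  · intro h
    have := congrArg (PowerSeries.coeff 0) h
    simp only [aSeries, PowerSeries.coeff_mk, map_zero] at this
    exact MvPolynomial.X_ne_zero _ this
  · intro h
    have := congrArg (PowerSeries.coeff 0) h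
    simp only [bSeries, PowerSeries.coeff_mk, map_zero] at this
    exact MvPolynomial.X_ne_zero _ this

end MapLemmas

/-- every `t`-coefficient of every series `Q_{s,r,w}` lies in the kernel
of the Veronese arc map `ν_l`, i.e. `I ⊆ ker ν_l`. -/
theorem QIdeal_le_ker_nuMap (l : ℕ) (hl : 1 ≤ l) :
    QIdeal l ≤ RingHom.ker (nuMap l).toRingHom := by
  rw [QIdeal, Ideal.span_le]
  rintro q hq
  simp only [Set.mem_setOf_eq] at hq
  obtain ⟨s, r, w, m, hr, h1, h2, rfl⟩ := hq
  rw [SetLike.mem_coe, RingHom.mem_ker]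
  have hmap : PowerSeries.map (nuMap l).toRingHom (Qseries l s r w hr) = 0 := by
    set A := PowerSeries (MvPolynomial (Bool × ℕ) ℂ)
    set a := aSeries
    set b := bSeries
    set n := r - s - 1 with hn
    rw [Qseries, map_sum]
    have hstep : ∀ u ∈ Finset.Icc s (r - 1),
        PowerSeries.map (nuMap l).toRingHom
          (if h : s ≤ u ∧ u < r then
            ((-1 : ℂ) ^ u * ((r - s - 1).choose (u - s) : ℂ)) •
              (tDeriv^[w] (xSeries l ⟨u, by omega⟩) * xSeries l ⟨r + s - u, by omega⟩)
          else 0)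
        = ((-1 : ℂ) ^ u * (n.choose (u - s) : ℂ)) •
            (tDeriv^[w] (a ^ (l - u) * b ^ u) * (a ^ (l - (r + s - u)) * b ^ (r + s - u))) := by
      intro u hu
      obtain ⟨hu1, hu2⟩ := Finset.mem_Icc.mp hu
      have hcond : s ≤ u ∧ u < r := ⟨hu1, by omega⟩
      rw [dif_pos hcond, map_csmul, map_mul, map_tDeriv_iterate, map_xSeries, map_xSeries]
    rw [Finset.sum_congr rfl hstep]
    have hIcc : Finset.Icc s (r - 1) = Finset.Ico s r := by
      rw [← Finset.Ico_add_one_right_eq_Icc]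
      congr 1
      omega
    rw [hIcc, Finset.sum_Ico_eq_sum_range]
    have hrs : r - s = n + 1 := by omega
    rw [hrs]
    have hw' : w < n := by omega
    have hm' : n ≤ l - s := by omega
    have hd' : n ≤ r := by omega
    have hterm : ∀ k ∈ Finset.range (n + 1),
        ((-1 : ℂ) ^ (s + k) * (n.choose (s + k - s) : ℂ)) •
          (tDeriv^[w] (a ^ (l - (s + k)) * b ^ (s + k)) *
            (a ^ (l - (r + s - (s + k))) * b ^ (r + s - (s + k))))
        = (-1 : A) ^ s * ((-1 : A) ^ k * (n.choose k : A) *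
            (tDeriv^[w] (a ^ (l - s - k) * b ^ (s + k)) *
              (a ^ (l - r + k) * b ^ (r - k)))) := by
      intro k hk
      have hkn : k ≤ n := by have := Finset.mem_range.mp hk; omega
      have e1 : l - (s + k) = l - s - k := by omega
      have e2 : r + s - (s + k) = r - k := by omega
      have e4 : s + k - s = k := by omega
      rw [e1, e2, e4]
      have e3 : l - (r - k) = l - r + k := by omega
      rw [e3]
      rw [Algebra.smul_def]
      rw [map_mul, map_pow, map_neg, map_one, map_natCast]
      rw [pow_add]
      ring
    rw [Finset.sum_congr rfl hterm, ← Finset.mul_sum]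
    rw [key_vanish a b ab_ne_zero (l - s) s (l - r) r n w hw' hm' hd', mul_zero]
  calc (nuMap l).toRingHom (PowerSeries.coeff m (Qseries l s r w hr))
      = PowerSeries.coeff m
          (PowerSeries.map (nuMap l).toRingHom (Qseries l s r w hr)) :=
        (PowerSeries.coeff_map (f := _) _ _).symm
    _ = 0 := by rw [hmap]; simp
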